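/- arXiv:1906.03746 — 4 statements merged into one kernel-verified Lean document; each statement's English description precedes it below -/
import Mathlib

section
/- With the commutation relations δP_a − P_aδ = εP_b, P_a d − dP_a = P_b ε*, P_b ε P_b = P_b ε* P_b = 0, the antibasic Laplacian Δ_a = δ_a d_a + d_a δ_a (where d_a = P_a d, δ_a = δ P_a) satisfies Δ_a P_a = (Δ + δ P_b ε* + P_b ε* δ) P_a = P_a (Δ − ε P_b ε*) P_a, where Δ = dδ + δd is the ordinary Laplacian. -/
/-!
We work in the ring of endomorphisms with `p = P_b`, `1 - p = P_a` and `ε' = ε*`.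
Multiplying the relation for `δ` on the right by `1 - p` and by `p` gives `P_a δ P_a = δ P_a`
and `P_a δ P_b = -ε P_b`; multiplying the relation for `d` by `1 - p` and then by `P_b` gives
`P_a d P_a = d P_a + P_b ε* P_a` and `P_b d P_a = -P_b ε* P_a`. Expanding `Δ_a P_a` and the
compression `P_a (Δ - ε P_b ε*) P_a` with these identities reduces both to
`(Δ + δ P_b ε* + P_b ε* δ) P_a`.
-/

namespace IsIdempotentElem

variable {R : Type*} [Ring R] {p a b : R}

theorem one_sub_mul_mul_one_sub_of_sub_eq_mul (hp : IsIdempotentElem p)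
    (h : a * (1 - p) - (1 - p) * a = b * p) : (1 - p) * a * (1 - p) = a * (1 - p) :=
  calc (1 - p) * a * (1 - p)
      = a * ((1 - p) * (1 - p)) - (a * (1 - p) - (1 - p) * a) * (1 - p) := by noncomm_ring
    _ = a * (1 - p) := by
      rw [hp.one_sub.eq, h, mul_assoc, hp.mul_one_sub_self, mul_zero, sub_zero]

theorem one_sub_mul_mul_of_sub_eq_mul (hp : IsIdempotentElem p)
    (h : a * (1 - p) - (1 - p) * a = b * p) : (1 - p) * a * p = -(b * p) :=
  calc (1 - p) * a * p = a * ((1 - p) * p) - (a * (1 - p) - (1 - p) * a) * p := by noncomm_ring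
    _ = -(b * p) := by rw [hp.one_sub_mul_self, h, mul_assoc, hp.eq, mul_zero, zero_sub]

theorem one_sub_mul_mul_self_of_sub_eq_mul (hp : IsIdempotentElem p)
    (h : a * (1 - p) - (1 - p) * a = b * p) : (1 - p) * b * p = b * p :=
  calc (1 - p) * b * p = -((1 - p) * ((1 - p) * a * p)) := by
        rw [hp.one_sub_mul_mul_of_sub_eq_mul h]; noncomm_ring
    _ = b * p := by
      rw [← mul_assoc, ← mul_assoc, hp.one_sub.eq, hp.one_sub_mul_mul_of_sub_eq_mul h, neg_neg]

theorem one_sub_mul_mul_one_sub_of_sub_eq_mul_left (hp : IsIdempotentElem p)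
    (h : (1 - p) * a - a * (1 - p) = p * b) :
    (1 - p) * a * (1 - p) = a * (1 - p) + p * b * (1 - p) :=
  calc (1 - p) * a * (1 - p) = (a * (1 - p) + ((1 - p) * a - a * (1 - p))) * (1 - p) := by
        rw [add_sub_cancel]
    _ = a * (1 - p) + p * b * (1 - p) := by rw [h, add_mul, mul_assoc a, hp.one_sub.eq]

theorem mul_mul_one_sub_of_sub_eq_mul_left (hp : IsIdempotentElem p)
    (h : (1 - p) * a - a * (1 - p) = p * b) : p * a * (1 - p) = -(p * b * (1 - p)) :=
  calc p * a * (1 - p) = p * a * ((1 - p) * (1 - p)) - p * (1 - p) * a * (1 - p) := by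
        rw [hp.one_sub.eq, hp.mul_one_sub_self]; noncomm_ring
    _ = -(p * ((1 - p) * a - a * (1 - p)) * (1 - p)) := by noncomm_ring
    _ = -(p * b * (1 - p)) := by rw [h, ← mul_assoc, hp.eq]

end IsIdempotentElem

section AntibasicLaplacian

variable {R : Type*} [Ring R] {p d δ ε ε' : R}

def antibasicLaplacian (p d δ : R) : R :=
  δ * (1 - p) * ((1 - p) * d) + (1 - p) * d * (δ * (1 - p))

variable (hp : IsIdempotentElem p) (hδ : δ * (1 - p) - (1 - p) * δ = ε * p)
  (hd : (1 - p) * d - d * (1 - p) = p * ε')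
include hp hδ hd

theorem compress_d_mul_δ : (1 - p) * (d * δ) * (1 - p) = (d * δ + p * ε' * δ) * (1 - p) := by
  have hδp := hp.one_sub_mul_mul_one_sub_of_sub_eq_mul hδ
  calc (1 - p) * (d * δ) * (1 - p) = (1 - p) * d * ((1 - p) * δ * (1 - p)) := by
        rw [hδp]; noncomm_ring
    _ = (1 - p) * d * (1 - p) * δ * (1 - p) := by noncomm_ring
    _ = d * ((1 - p) * δ * (1 - p)) + p * ε' * ((1 - p) * δ * (1 - p)) := by
        rw [hp.one_sub_mul_mul_one_sub_of_sub_eq_mul_left hd]; noncomm_ring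
    _ = (d * δ + p * ε' * δ) * (1 - p) := by rw [hδp]; noncomm_ring

theorem compress_δ_mul_d :
    (1 - p) * (δ * d) * (1 - p) = (δ * d + δ * p * ε' + ε * p * ε') * (1 - p) :=
  calc (1 - p) * (δ * d) * (1 - p)
      = (1 - p) * δ * (1 - p) * d * (1 - p) + (1 - p) * δ * p * d * (1 - p) := by
        -- split `1 = (1 - p) + p` between `δ` and `d`
        noncomm_ring
    _ = δ * ((1 - p) * d * (1 - p)) - ε * (p * d * (1 - p)) := by
        rw [hp.one_sub_mul_mul_one_sub_of_sub_eq_mul hδ, hp.one_sub_mul_mul_of_sub_eq_mul hδ]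
        noncomm_ring
    _ = (δ * d + δ * p * ε' + ε * p * ε') * (1 - p) := by
        rw [hp.one_sub_mul_mul_one_sub_of_sub_eq_mul_left hd,
          hp.mul_mul_one_sub_of_sub_eq_mul_left hd]
        noncomm_ring

theorem antibasicLaplacian_mul_one_sub :
    antibasicLaplacian p d δ * (1 - p) = (d * δ + δ * d + δ * p * ε' + p * ε' * δ) * (1 - p) :=
  calc antibasicLaplacian p d δ * (1 - p)
      = δ * ((1 - p) * (1 - p)) * d * (1 - p) + (1 - p) * (d * δ) * ((1 - p) * (1 - p)) := by
        unfold antibasicLaplacian; noncomm_ring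
    _ = δ * ((1 - p) * d * (1 - p)) + (1 - p) * (d * δ) * (1 - p) := by
        rw [hp.one_sub.eq]; noncomm_ring
    _ = (d * δ + δ * d + δ * p * ε' + p * ε' * δ) * (1 - p) := by
        rw [hp.one_sub_mul_mul_one_sub_of_sub_eq_mul_left hd, compress_d_mul_δ hp hδ hd]
        noncomm_ring

theorem compress_laplacian_sub_eq :
    (1 - p) * (d * δ + δ * d - ε * p * ε') * (1 - p) =
      (d * δ + δ * d + δ * p * ε' + p * ε' * δ) * (1 - p) :=
  calc (1 - p) * (d * δ + δ * d - ε * p * ε') * (1 - p)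
      = (1 - p) * (d * δ) * (1 - p) + (1 - p) * (δ * d) * (1 - p)
          - (1 - p) * ε * p * ε' * (1 - p) := by noncomm_ring
    _ = (d * δ + δ * d + δ * p * ε' + p * ε' * δ) * (1 - p) := by
        rw [compress_d_mul_δ hp hδ hd, compress_δ_mul_d hp hδ hd,
          hp.one_sub_mul_mul_self_of_sub_eq_mul hδ]
        noncomm_ring

end AntibasicLaplacian

theorem stmt_7_general {V : Type*} [AddCommGroup V] [Module ℝ V]
    (d δ Pb ε ε' : V →ₗ[ℝ] V)
    (hPb : Pb ∘ₗ Pb = Pb)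
    (Pa : V →ₗ[ℝ] V) (hPa : Pa = LinearMap.id - Pb)
    (hc1 : δ ∘ₗ Pa - Pa ∘ₗ δ = ε ∘ₗ Pb)
    (hc2 : Pa ∘ₗ d - d ∘ₗ Pa = Pb ∘ₗ ε')
    (da δa Δa Δ : V →ₗ[ℝ] V)
    (hda : da = Pa ∘ₗ d) (hδa : δa = δ ∘ₗ Pa)
    (hΔa : Δa = δa ∘ₗ da + da ∘ₗ δa)
    (hΔ : Δ = d ∘ₗ δ + δ ∘ₗ d) :
    Δa ∘ₗ Pa = (Δ + δ ∘ₗ Pb ∘ₗ ε' + Pb ∘ₗ ε' ∘ₗ δ) ∘ₗ Pa ∧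
    Δa ∘ₗ Pa = Pa ∘ₗ (Δ - ε ∘ₗ Pb ∘ₗ ε') ∘ₗ Pa := by
  subst hPa hda hδa hΔa hΔ
  simp only [← Module.End.mul_eq_comp, ← Module.End.one_eq_id] at *
  have hΔa := antibasicLaplacian_mul_one_sub hPb hc1 hc2
  have hcompress := compress_laplacian_sub_eq hPb hc1 hc2
  simp only [antibasicLaplacian, mul_assoc] at hΔa hcompress ⊢
  exact ⟨hΔa, hΔa.trans hcompress.symm⟩

/-- The antibasic Laplacian `Δ_a = δ_a d_a + d_a δ_a` (with `d_a = P_a d`,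
`δ_a = δ P_a`) satisfies
`Δ_a P_a = (Δ + δ P_b ε* + P_b ε* δ) P_a = P_a (Δ − ε P_b ε*) P_a`,
where `Δ = dδ + δd`, given the commutation relations
`δ P_a − P_a δ = ε P_b`, `P_a d − d P_a = P_b ε*`, and `P_b ε P_b = P_b ε* P_b = 0`. -/
theorem stmt_7 {V : Type*} [AddCommGroup V] [Module ℝ V]
    (d δ Pb ε ε' : V →ₗ[ℝ] V)
    (hd2 : d ∘ₗ d = 0) (hδ2 : δ ∘ₗ δ = 0)
    (hPb : Pb ∘ₗ Pb = Pb)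
    (Pa : V →ₗ[ℝ] V) (hPa : Pa = LinearMap.id - Pb)
    (hc1 : δ ∘ₗ Pa - Pa ∘ₗ δ = ε ∘ₗ Pb)
    (hc2 : Pa ∘ₗ d - d ∘ₗ Pa = Pb ∘ₗ ε')
    (hb : Pb ∘ₗ ε ∘ₗ Pb = 0) (hb' : Pb ∘ₗ ε' ∘ₗ Pb = 0)
    (da δa Δa Δ : V →ₗ[ℝ] V)
    (hda : da = Pa ∘ₗ d) (hδa : δa = δ ∘ₗ Pa)
    (hΔa : Δa = δa ∘ₗ da + da ∘ₗ δa)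
    (hΔ : Δ = d ∘ₗ δ + δ ∘ₗ d) :
    Δa ∘ₗ Pa = (Δ + δ ∘ₗ Pb ∘ₗ ε' + Pb ∘ₗ ε' ∘ₗ δ) ∘ₗ Pa ∧
    Δa ∘ₗ Pa = Pa ∘ₗ (Δ - ε ∘ₗ Pb ∘ₗ ε') ∘ₗ Pa :=
  stmt_7_general d δ Pb ε ε' hPb Pa hPa hc1 hc2 da δa Δa Δ hda hδa hΔa hΔ
end

section
/- Let D_a be a self-adjoint operator on a Hilbert space with orthogonal graph decomposition H ⊕ H = Ḡ ⊕ JḠ where J(x,y) = (y,−x), and let Q_a be defined by: (Q_aα, D_aQ_aα) is the orthogonal projection of (α, 0) onto Ḡ. If α is an eigenvector of Q_a with eigenvalue μ ∈ (0,1), then setting λ² = (1−μ)/μ, there exists β with D_aα = λβ and D_aβ = λα, so that α ± β are eigenvectors of D_a with eigenvalues ±λ. -/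
open scoped RealInnerProductSpace

/-- Let `D_a` be a (closed, self-adjoint) operator with domain `dom` in a Hilbert space
`H`, whose graph `Ḡ` satisfies the orthogonal decomposition `H ⊕ H = Ḡ ⊕ JḠ` with
`J(x,y) = (y,−x)`; concretely, every `(α, 0)` decomposes as
`(α, 0) = (Q_a α, D_a Q_a α) + (−D_a η, η)` for some `η ∈ dom`, which defines the
projection operator `Q_a`.  If `α` is an eigenvector of `Q_a` with eigenvalue
`μ ∈ (0,1)`, then with `λ = √((1−μ)/μ)` there is `β` with `D_a α = λ β` and
`D_a β = λ α`, so that `α ± β` are eigenvectors of `D_a` with eigenvalues `±λ`. -/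
theorem stmt_14 {H : Type*} [NormedAddCommGroup H] [InnerProductSpace ℝ H]
    [CompleteSpace H]
    (dom : Submodule ℝ H) (D : dom →ₗ[ℝ] H)
    (hsym : ∀ x y : dom, ⟪D x, (y : H)⟫ = ⟪(x : H), D y⟫)
    (hclosed : IsClosed {p : H × H | ∃ ω : dom, p = ((ω : H), D ω)})
    (Q : H →ₗ[ℝ] H) (hQdom : ∀ a, Q a ∈ dom)
    (hQ : ∀ a : H, ∃ η : dom, a = Q a - D η ∧ D ⟨Q a, hQdom a⟩ + (η : H) = 0)
    (α : H) (hα : α ≠ 0) (μ : ℝ) (hμ0 : 0 < μ) (hμ1 : μ < 1)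
    (heig : Q α = μ • α) :
    ∃ (hαdom : α ∈ dom) (β : H) (hβdom : β ∈ dom),
      D ⟨α, hαdom⟩ = Real.sqrt ((1 - μ) / μ) • β ∧
      D ⟨β, hβdom⟩ = Real.sqrt ((1 - μ) / μ) • α ∧
      D ⟨α + β, add_mem hαdom hβdom⟩ = Real.sqrt ((1 - μ) / μ) • (α + β) ∧
      D ⟨α - β, sub_mem hαdom hβdom⟩ = (-Real.sqrt ((1 - μ) / μ)) • (α - β) := by
  obtain ⟨η, h1, h2⟩ := hQ α
  have hμ : μ ≠ 0 := ne_of_gt hμ0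
  have hfrac : 0 < (1 - μ) / μ := div_pos (by linarith) hμ0
  -- α ∈ dom
  have hαdom : α ∈ dom := by
    have : α = μ⁻¹ • Q α := by rw [heig, smul_smul, inv_mul_cancel₀ hμ, one_smul]
    rw [this]; exact dom.smul_mem _ (hQdom α)
  set αd : dom := ⟨α, hαdom⟩ with hαd
  -- rewrite D ⟨Q α, _⟩ as μ • D αd
  have hQα : (⟨Q α, hQdom α⟩ : dom) = μ • αd := by
    apply Subtype.ext; simp [heig, hαd]
  rw [hQα, map_smul] at h2
  have hη : (η : H) = -(μ • D αd) := eq_neg_of_add_eq_zero_right h2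
  -- D αd ∈ dom
  have hDαdom : D αd ∈ dom := by
    have : D αd = (-μ⁻¹) • (η : H) := by
      rw [hη]; rw [smul_neg, smul_smul]; simp [hμ]
    rw [this]; exact dom.smul_mem _ η.2
  have hηd : η = (-μ) • (⟨D αd, hDαdom⟩ : dom) := by
    apply Subtype.ext; simpa using hη
  -- D η = (μ - 1) • α
  have hDη : D η = (μ - 1) • α := by
    rw [heig, eq_sub_iff_add_eq] at h1
    rw [sub_smul, one_smul, ← h1]
    abel
  have hDDα : D (⟨D αd, hDαdom⟩ : dom) = ((1 - μ) / μ) • α := by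
    rw [hηd, map_smul] at hDη
    have hcan : (-μ⁻¹ : ℝ) * -μ = 1 := by field_simp
    have h3 : D (⟨D αd, hDαdom⟩ : dom) = (-μ⁻¹) • ((μ - 1) • α) := by
      rw [← hDη, smul_smul, hcan, one_smul]
    rw [h3, smul_smul]
    congr 1
    field_simp
    ring
  set l := Real.sqrt ((1 - μ) / μ) with hl
  have hlpos : 0 < l := Real.sqrt_pos.mpr hfrac
  have hlsq : l * l = (1 - μ) / μ := Real.mul_self_sqrt hfrac.le
  have hlne : l ≠ 0 := ne_of_gt hlpos
  refine ⟨hαdom, l⁻¹ • D αd, dom.smul_mem _ hDαdom, ?_, ?_, ?_, ?_⟩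
  · rw [smul_smul, mul_inv_cancel₀ hlne, one_smul]
  · have : (⟨l⁻¹ • D αd, dom.smul_mem _ hDαdom⟩ : dom)
        = l⁻¹ • (⟨D αd, hDαdom⟩ : dom) := rfl
    rw [this, map_smul, hDDα, smul_smul, ← hlsq]
    congr 1
    field_simp
  · have he : (⟨α + l⁻¹ • D αd, _⟩ : dom)
        = αd + l⁻¹ • (⟨D αd, hDαdom⟩ : dom) := rfl
    rw [he, map_add, map_smul, hDDα, ← hlsq]
    match_scalars <;> field_simp
  · have he : (⟨α - l⁻¹ • D αd, _⟩ : dom)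
        = αd - l⁻¹ • (⟨D αd, hDαdom⟩ : dom) := rfl
    rw [he, map_sub, map_smul, hDDα, ← hlsq]
    match_scalars <;> field_simp
end

section
/- If f : (M,F) → (M′,F′) is a foliated smooth map between Riemannian foliations of closed manifolds with bundle-like metrics, then P_a f* P_a′ commutes with the antibasic differentials: P_a f* P_a′ d_a′ = d_a P_a f* P_a′, where d_a = P_a d and d_a′ = P_a′ d′. Hence P_a f* P_a′ induces a linear map on d_a-antibasic cohomology. -/
/-!
Expand `P_a′ d′ = d′ P_a′ + P_b′ ε′`: the correction term `P_b′ ε′` is carried by `f*` into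
basic forms, which `P_a` annihilates, and on the remaining term `f*` commutes with `d`;
`P_a d P_a = P_a d` then inserts the missing `P_a`. Kernels and images of the antibasic
differentials are preserved by evaluating this identity.
-/

namespace LinearMap

variable {R V V' : Type*} [Ring R] [AddCommGroup V] [Module R V] [AddCommGroup V'] [Module R V']

theorem antibasicPullback_comp_antibasicDiff {d Pa Pb : V →ₗ[R] V}
    {d' Pa' Pb' ε' : V' →ₗ[R] V'} {φ : V' →ₗ[R] V} (hPaPb : Pa ∘ₗ Pb = 0)
    (hPa' : Pa' ∘ₗ Pa' = Pa') (hφd : φ ∘ₗ d' = d ∘ₗ φ) (hφb : φ ∘ₗ Pb' = Pb ∘ₗ (φ ∘ₗ Pb'))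
    (hPa'd : Pa' ∘ₗ d' = d' ∘ₗ Pa' + Pb' ∘ₗ ε') (hPad : Pa ∘ₗ d ∘ₗ Pa = Pa ∘ₗ d) :
    (Pa ∘ₗ φ ∘ₗ Pa') ∘ₗ (Pa' ∘ₗ d') = (Pa ∘ₗ d) ∘ₗ (Pa ∘ₗ φ ∘ₗ Pa') := by
  ext v
  have hbasic : Pa (φ (Pb' (ε' v))) = 0 := by
    rw [show φ (Pb' (ε' v)) = Pb (φ (Pb' (ε' v))) from congr($hφb (ε' v))]
    exact congr($hPaPb (φ (Pb' (ε' v))))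
  calc Pa (φ (Pa' (Pa' (d' v)))) = Pa (φ (Pa' (d' v))) := by
        rw [show Pa' (Pa' (d' v)) = Pa' (d' v) from congr($hPa' (d' v))]
    _ = Pa (φ (d' (Pa' v))) + Pa (φ (Pb' (ε' v))) := by
        rw [show Pa' (d' v) = d' (Pa' v) + Pb' (ε' v) from congr($hPa'd v), map_add, map_add]
    _ = Pa (d (φ (Pa' v))) := by
        rw [hbasic, add_zero]
        exact congr(Pa ($hφd (Pa' v)))
    _ = Pa (d (Pa (φ (Pa' v)))) := congr($hPad (φ (Pa' v))).symm

end LinearMap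

/-- If `f : (M,F) → (M′,F′)` is a foliated map (so its pullback `φ = f*` commutes with
`d` and preserves basic forms, `φ P_b′ = P_b φ P_b′`), then `P_a φ P_a′` intertwines
the antibasic differentials: `(P_a f* P_a′) d_a′ = d_a (P_a f* P_a′)` with
`d_a = P_a d` and `d_a′ = P_a′ d′`; hence it maps `ker d_a′` into `ker d_a` and
`im d_a′` into `im d_a`, inducing a linear map on antibasic cohomology. -/
theorem stmt_16 {V V' : Type*} [AddCommGroup V] [Module ℝ V]
    [AddCommGroup V'] [Module ℝ V']
    (d Pa Pb : V →ₗ[ℝ] V) (d' Pa' Pb' ε' : V' →ₗ[ℝ] V')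
    (hPb : Pb ∘ₗ Pb = Pb) (hPa : Pa = LinearMap.id - Pb)
    (hPb' : Pb' ∘ₗ Pb' = Pb') (hPa' : Pa' = LinearMap.id - Pb')
    (φ : V' →ₗ[ℝ] V)
    (hφd : φ ∘ₗ d' = d ∘ₗ φ)
    (hφb : φ ∘ₗ Pb' = Pb ∘ₗ (φ ∘ₗ Pb'))
    (hPa'd : Pa' ∘ₗ d' = d' ∘ₗ Pa' + Pb' ∘ₗ ε')
    (hPad : Pa ∘ₗ d ∘ₗ Pa = Pa ∘ₗ d) :
    ((Pa ∘ₗ φ ∘ₗ Pa') ∘ₗ (Pa' ∘ₗ d') = (Pa ∘ₗ d) ∘ₗ (Pa ∘ₗ φ ∘ₗ Pa')) ∧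
    (∀ x : V', Pa' (d' x) = 0 → Pa (d (Pa (φ (Pa' x)))) = 0) ∧
    (∀ y : V', ∃ z : V, Pa (φ (Pa' (Pa' (d' y)))) = Pa (d (Pa z))) := by
  have hPaPb : Pa ∘ₗ Pb = 0 := by
    rw [hPa]
    exact IsIdempotentElem.one_sub_mul_self hPb
  have hPa'_idem : Pa' ∘ₗ Pa' = Pa' := by
    rw [hPa']
    exact IsIdempotentElem.one_sub hPb'
  have hcomm := LinearMap.antibasicPullback_comp_antibasicDiff hPaPb hPa'_idem hφd hφb hPa'd hPad
  refine ⟨hcomm, fun x hx => ?_, fun y => ⟨φ (Pa' y), congr($hcomm y)⟩⟩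
  calc Pa (d (Pa (φ (Pa' x)))) = Pa (φ (Pa' (Pa' (d' x)))) := congr($hcomm x).symm
    _ = 0 := by rw [hx, map_zero, map_zero, map_zero]
end

section
/- Foliated homotopy invariance: if f, g : (M,F) → (M′,F′) are foliated maps of Riemannian foliations of closed manifolds with bundle-like metrics and there is an operator h on forms preserving the basic forms such that g* − f* = dh + hd, then P_a g* P_a′ − P_a f* P_a′ = d_a(P_a h P_a′) + (P_a h P_a′) d_a′, so the two maps induce the same map on antibasic cohomology. -/
/-!
Compressing a chain homotopy by the antibasic projections gives a chain homotopy for the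
compressed maps: since `h` sends basic forms to basic forms, `P_a h P_a′ = P_a h`, and together
with `P_a d P_a = P_a d` the right-hand side collapses to `P_a (d h + h d′) P_a′ = P_a (g* − f*) P_a′`.
-/

namespace LinearMap

variable {R M M' : Type*} [Ring R] [AddCommGroup M] [Module R M] [AddCommGroup M'] [Module R M']

theorem id_sub_comp_self_of_idem {P : M →ₗ[R] M} (hP : P ∘ₗ P = P) : (id - P) ∘ₗ P = 0 := by
  rw [sub_comp, hP, id_comp, sub_self]

theorem id_sub_comp_id_sub_of_idem {P : M →ₗ[R] M} (hP : P ∘ₗ P = P) :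
    (id - P) ∘ₗ (id - P) = id - P := by
  rw [comp_sub, comp_id, id_sub_comp_self_of_idem hP, sub_zero]

theorem id_sub_comp_comp_id_sub_of_comp_eq {Q : M →ₗ[R] M} {Q' : M' →ₗ[R] M'}
    (hQ : Q ∘ₗ Q = Q) {h : M' →ₗ[R] M} (hh : h ∘ₗ Q' = Q ∘ₗ (h ∘ₗ Q')) :
    (id - Q) ∘ₗ h ∘ₗ (id - Q') = (id - Q) ∘ₗ h := by
  rw [comp_sub, comp_sub, comp_id, hh, ← comp_assoc, id_sub_comp_self_of_idem hQ, zero_comp,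
    sub_zero]

theorem comp_sub_comp_eq_of_homotopy {P : M →ₗ[R] M} {P' : M' →ₗ[R] M'}
    {d : M →ₗ[R] M} {d' : M' →ₗ[R] M'} {f g h : M' →ₗ[R] M}
    (hP : P ∘ₗ P = P) (hP' : P' ∘ₗ P' = P') (hd : P ∘ₗ d ∘ₗ P = P ∘ₗ d)
    (hh : P ∘ₗ h ∘ₗ P' = P ∘ₗ h) (hhom : g - f = d ∘ₗ h + h ∘ₗ d') :
    P ∘ₗ g ∘ₗ P' - P ∘ₗ f ∘ₗ P'
      = (P ∘ₗ d ∘ₗ P) ∘ₗ (P ∘ₗ h ∘ₗ P') + (P ∘ₗ h ∘ₗ P') ∘ₗ (P' ∘ₗ d' ∘ₗ P') := by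
  calc P ∘ₗ g ∘ₗ P' - P ∘ₗ f ∘ₗ P' = P ∘ₗ (g - f) ∘ₗ P' := by rw [sub_comp, comp_sub]
    _ = (P ∘ₗ d) ∘ₗ h ∘ₗ P' + (P ∘ₗ h) ∘ₗ d' ∘ₗ P' := by
      rw [hhom, add_comp, comp_add]; rfl
    _ = (P ∘ₗ d ∘ₗ (P ∘ₗ P)) ∘ₗ h ∘ₗ P' + (P ∘ₗ h ∘ₗ (P' ∘ₗ P')) ∘ₗ d' ∘ₗ P' := by
      rw [hP, hP', hd, hh]
    _ = _ := rfl

theorem sub_apply_eq_of_homotopy {F G H : M' →ₗ[R] M} {D : M →ₗ[R] M} {D' : M' →ₗ[R] M'}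
    (hhom : G - F = D ∘ₗ H + H ∘ₗ D') {x : M'} (hx : D' x = 0) : G x - F x = D (H x) := by
  simpa [hx] using LinearMap.congr_fun hhom x

end LinearMap

open LinearMap in
theorem stmt_17_general {V V' : Type*} [AddCommGroup V] [Module ℝ V]
    [AddCommGroup V'] [Module ℝ V']
    (d Pa Pb : V →ₗ[ℝ] V) (d' Pa' Pb' : V' →ₗ[ℝ] V')
    (hPb : Pb ∘ₗ Pb = Pb) (hPa : Pa = LinearMap.id - Pb)
    (hPb' : Pb' ∘ₗ Pb' = Pb') (hPa' : Pa' = LinearMap.id - Pb')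
    (f g h : V' →ₗ[ℝ] V)
    (hhom : g - f = d ∘ₗ h + h ∘ₗ d')
    (hhb : h ∘ₗ Pb' = Pb ∘ₗ (h ∘ₗ Pb'))
    (hPad : Pa ∘ₗ d ∘ₗ Pa = Pa ∘ₗ d) :
    (Pa ∘ₗ g ∘ₗ Pa' - Pa ∘ₗ f ∘ₗ Pa'
      = (Pa ∘ₗ d ∘ₗ Pa) ∘ₗ (Pa ∘ₗ h ∘ₗ Pa')
        + (Pa ∘ₗ h ∘ₗ Pa') ∘ₗ (Pa' ∘ₗ d' ∘ₗ Pa')) ∧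
    (∀ x : V', Pa' (d' (Pa' x)) = 0 →
      ∃ y : V, Pa (g (Pa' x)) - Pa (f (Pa' x)) = Pa (d (Pa y))) := by
  have hPaPa : Pa ∘ₗ Pa = Pa := hPa ▸ id_sub_comp_id_sub_of_idem hPb
  have hPa'Pa' : Pa' ∘ₗ Pa' = Pa' := hPa' ▸ id_sub_comp_id_sub_of_idem hPb'
  have hPah : Pa ∘ₗ h ∘ₗ Pa' = Pa ∘ₗ h := by
    rw [hPa, hPa']
    exact id_sub_comp_comp_id_sub_of_comp_eq hPb hhb
  have hcomp := comp_sub_comp_eq_of_homotopy hPaPa hPa'Pa' hPad hPah hhom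
  exact ⟨hcomp, fun x hx => ⟨_, sub_apply_eq_of_homotopy hcomp hx⟩⟩

/-- Foliated homotopy invariance: if `f, g` are foliated maps with pullbacks `f*, g*`
related by a chain homotopy `h` preserving basic forms (`g* − f* = d h + h d′` and
`h P_b′ = P_b h P_b′`), then
`P_a g* P_a′ − P_a f* P_a′ = d_a (P_a h P_a′) + (P_a h P_a′) d_a′`
with `d_a = P_a d P_a`, `d_a′ = P_a′ d′ P_a′`; hence the two induced maps agree on
antibasic cohomology. -/
theorem stmt_17 {V V' : Type*} [AddCommGroup V] [Module ℝ V]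
    [AddCommGroup V'] [Module ℝ V']
    (d Pa Pb : V →ₗ[ℝ] V) (d' Pa' Pb' ε' : V' →ₗ[ℝ] V')
    (hPb : Pb ∘ₗ Pb = Pb) (hPa : Pa = LinearMap.id - Pb)
    (hPb' : Pb' ∘ₗ Pb' = Pb') (hPa' : Pa' = LinearMap.id - Pb')
    (f g h : V' →ₗ[ℝ] V)
    (hhom : g - f = d ∘ₗ h + h ∘ₗ d')
    (hhb : h ∘ₗ Pb' = Pb ∘ₗ (h ∘ₗ Pb'))
    (hPa'd : Pa' ∘ₗ d' = d' ∘ₗ Pa' + Pb' ∘ₗ ε')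
    (hPad : Pa ∘ₗ d ∘ₗ Pa = Pa ∘ₗ d) :
    (Pa ∘ₗ g ∘ₗ Pa' - Pa ∘ₗ f ∘ₗ Pa'
      = (Pa ∘ₗ d ∘ₗ Pa) ∘ₗ (Pa ∘ₗ h ∘ₗ Pa')
        + (Pa ∘ₗ h ∘ₗ Pa') ∘ₗ (Pa' ∘ₗ d' ∘ₗ Pa')) ∧
    (∀ x : V', Pa' (d' (Pa' x)) = 0 →
      ∃ y : V, Pa (g (Pa' x)) - Pa (f (Pa' x)) = Pa (d (Pa y))) :=
  stmt_17_general d Pa Pb d' Pa' Pb' hPb hPa hPb' hPa' f g h hhom hhb hPad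
end
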